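/- Let F be a field, let B be a finite nonempty index set, let (α_i)_{i∈B} be distinct elements of F, let (e_i)_{i∈B} be nonzero elements of F, and let g ∈ F[z] with deg g ≥ 1 and g(α_i) ≠ 0 for all i ∈ B. Define σ(z) = Π_{i∈B} (z − α_i), w(z) = Σ_{i∈B} e_i Π_{j∈B, j≠i} (z − α_j), and the syndrome S = Σ_{i∈B} e_i·(z − α_i)^{−1} computed in the quotient ring F[z]/⟨g(z)⟩. Then: (i) σ and w are coprime in F[z] (gcd(σ(z), w(z)) = 1); and (ii) σ(z)·S ≡ w(z) (mod g(z)), i.e. the class of σ times S equals the class of w in F[z]/⟨g(z)⟩. -/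

import Mathlib

/-!
Evaluating `w` at `αᵢ` kills every term but the `i`-th, leaving `eᵢ ∏_{j ≠ i} (αᵢ - αⱼ) ≠ 0`; so no
linear factor of `σ` divides `w`. Modulo `g` each `z - αᵢ` is a unit, and `σ (z - αᵢ)⁻¹` is the
`i`-th product of `w`.
-/

open Polynomial

theorem IsCoprime.isUnit_mk_span_singleton {R : Type*} [CommRing R] {p g : R}
    (h : IsCoprime p g) : IsUnit (Ideal.Quotient.mk (Ideal.span {g}) p) := by
  obtain ⟨u, v, huv⟩ := h
  refine IsUnit.of_mul_eq_one (Ideal.Quotient.mk _ u) ?_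
  rw [← map_mul, ← map_one (Ideal.Quotient.mk _), Ideal.Quotient.eq]
  exact Ideal.mem_span_singleton'.2 ⟨-v, by linear_combination -huv⟩

theorem Polynomial.isCoprime_X_sub_C_of_eval_ne_zero {F : Type*} [Field F] {a : F} {p : F[X]}
    (h : p.eval a ≠ 0) : IsCoprime (X - C a) p := by
  rwa [(irreducible_X_sub_C a).coprime_iff_not_dvd, dvd_iff_isRoot]

theorem Finset.prod_mul_sum_mul_ringInverse {R ι : Type*} [CommSemiring R] [DecidableEq ι]
    {s : Finset ι} {u : ι → R} (c : ι → R) (hu : ∀ i ∈ s, IsUnit (u i)) :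
    (∏ i ∈ s, u i) * ∑ i ∈ s, c i * Ring.inverse (u i) = ∑ i ∈ s, c i * ∏ j ∈ s.erase i, u j := by
  rw [Finset.mul_sum]
  refine Finset.sum_congr rfl fun i hi => ?_
  rw [← Finset.mul_prod_erase s u hi]
  calc u i * (∏ j ∈ s.erase i, u j) * (c i * Ring.inverse (u i))
      = c i * (∏ j ∈ s.erase i, u j) * (u i * Ring.inverse (u i)) := by ring
    _ = c i * ∏ j ∈ s.erase i, u j := by rw [Ring.mul_inverse_cancel _ (hu i hi), mul_one]

theorem Polynomial.eval_sum_C_mul_prod_erase_X_sub_C {R ι : Type*} [CommRing R] [DecidableEq ι]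
    {s : Finset ι} (α e : ι → R) {i : ι} (hi : i ∈ s) :
    (∑ j ∈ s, C (e j) * ∏ k ∈ s.erase j, (X - C (α k))).eval (α i) =
      e i * ∏ k ∈ s.erase i, (α i - α k) := by
  simp only [eval_finsetSum, eval_mul, eval_C, eval_prod, eval_sub, eval_X]
  refine Finset.sum_eq_single_of_mem i hi fun j _ hji => ?_
  rw [Finset.prod_eq_zero (Finset.mem_erase.2 ⟨hji.symm, hi⟩) (sub_self (α i)), mul_zero]

theorem stmt15_general {F : Type*} [Field F] {ι : Type*} [DecidableEq ι] (B : Finset ι)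
    (α : ι → F) (hα : Set.InjOn α ↑B) (e : ι → F) (he : ∀ i ∈ B, e i ≠ 0)
    (g : F[X]) (hgα : ∀ i ∈ B, g.eval (α i) ≠ 0) :
    IsCoprime (∏ i ∈ B, (X - C (α i)))
        (∑ i ∈ B, C (e i) * ∏ j ∈ B.erase i, (X - C (α j))) ∧
      Ideal.Quotient.mk (Ideal.span {g}) (∏ i ∈ B, (X - C (α i))) *
          (∑ i ∈ B, Ideal.Quotient.mk (Ideal.span {g}) (C (e i)) *
            Ring.inverse (Ideal.Quotient.mk (Ideal.span {g}) (X - C (α i)))) =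
        Ideal.Quotient.mk (Ideal.span {g})
          (∑ i ∈ B, C (e i) * ∏ j ∈ B.erase i, (X - C (α j))) := by
  refine ⟨IsCoprime.prod_left fun i hi => isCoprime_X_sub_C_of_eval_ne_zero ?_, ?_⟩
  · rw [eval_sum_C_mul_prod_erase_X_sub_C α e hi]
    refine mul_ne_zero (he i hi) (Finset.prod_ne_zero_iff.2 fun j hj => sub_ne_zero.2 fun h => ?_)
    exact (Finset.mem_erase.1 hj).1 (hα (Finset.mem_erase.1 hj).2 hi h.symm)
  · rw [map_prod, Finset.prod_mul_sum_mul_ringInverse _ fun i hi =>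
      (isCoprime_X_sub_C_of_eval_ne_zero (hgα i hi)).isUnit_mk_span_singleton]
    simp only [map_sum, map_mul, map_prod]

/-- The error locator `σ` and error evaluator `w` are coprime, and the key equation
`σ(z)·S ≡ w(z) (mod g(z))` holds, where `S = ∑_{i∈B} eᵢ (z - αᵢ)⁻¹` is the syndrome
computed in `F[z]/⟨g⟩`. -/
theorem stmt15 {F : Type*} [Field F] {ι : Type*} [DecidableEq ι] (B : Finset ι) (hB : B.Nonempty)
    (α : ι → F) (hα : Set.InjOn α ↑B) (e : ι → F) (he : ∀ i ∈ B, e i ≠ 0)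
    (g : F[X]) (hg : 1 ≤ g.natDegree) (hgα : ∀ i ∈ B, g.eval (α i) ≠ 0) :
    IsCoprime (∏ i ∈ B, (X - C (α i)))
        (∑ i ∈ B, C (e i) * ∏ j ∈ B.erase i, (X - C (α j))) ∧
      Ideal.Quotient.mk (Ideal.span {g}) (∏ i ∈ B, (X - C (α i))) *
          (∑ i ∈ B, Ideal.Quotient.mk (Ideal.span {g}) (C (e i)) *
            Ring.inverse (Ideal.Quotient.mk (Ideal.span {g}) (X - C (α i)))) =
        Ideal.Quotient.mk (Ideal.span {g})
          (∑ i ∈ B, C (e i) * ∏ j ∈ B.erase i, (X - C (α j))) :=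
  stmt15_general B α hα e he g hgα
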